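/- Let n ≥ 1, ω_0,...,ω_n > 0, and regard each h^n_i as a function of t on (0,1). Then for every i with 1 ≤ i ≤ n and every t ∈ (0,1), the derivative satisfies (h^n_i)'(t) · (ω_{i-1}·i·(1-t) + ω_i·t·(n-i+1)·h^n_{i-1}(t)) = ω_{i-1}·i·h^n_i(t) + ω_i·(n-i+1)·(1 - h^n_i(t))·(t·(h^n_{i-1})'(t) + h^n_{i-1}(t)), with (h^n_0)' ≡ 0. -/

import Mathlib

/-!
Since `(k+1)(1-t) B^n_{k+1} = (n-k) t B^n_k` and the denominator of `h^n_{k+1}` is that of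
`h^n_k` plus `ω_{k+1} B^n_{k+1}`, the functions satisfy the algebraic identity
`h^n_{k+1} · (ω_k (k+1)(1-t) + ω_{k+1}(n-k) t h^n_k) = ω_{k+1}(n-k) t h^n_k` on `(0,1)`.
Differentiating it with the product rule gives the recurrence.
-/

open Finset

/-- The `k`-th Bernstein polynomial of degree `n`. -/
noncomputable def bern (n k : ℕ) (t : ℝ) : ℝ :=
  (n.choose k : ℝ) * t ^ k * (1 - t) ^ (n - k)

/-- The quantity `h^n_i(t)`, with `h^n_0(t) := 1`. -/
noncomputable def hfun (n : ℕ) (ω : ℕ → ℝ) (i : ℕ) (t : ℝ) : ℝ :=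
  if i = 0 then 1
  else ω i * bern n i t / ∑ k ∈ range (i + 1), ω k * bern n k t

open Filter Topology

theorem bern_pos {n k : ℕ} (hk : k ≤ n) {t : ℝ} (ht0 : 0 < t) (ht1 : t < 1) :
    0 < bern n k t := by
  have hchoose := Nat.choose_pos hk
  have hsub : 0 < 1 - t := sub_pos.mpr ht1
  unfold bern
  positivity

@[fun_prop]
theorem differentiable_bern (n k : ℕ) : Differentiable ℝ (bern n k) := by
  unfold bern
  fun_prop

theorem succ_mul_one_sub_mul_bern_succ {n k : ℕ} (hk : k < n) (t : ℝ) :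
    (k + 1) * (1 - t) * bern n (k + 1) t = (n - k) * t * bern n k t := by
  have hchoose : (n.choose (k + 1) : ℝ) * (k + 1) = n.choose k * (n - k) := by
    have h := congrArg (Nat.cast (R := ℝ)) (Nat.choose_succ_right_eq n k)
    push_cast [Nat.cast_sub hk.le] at h
    exact h
  have hexp : n - k = n - (k + 1) + 1 := by omega
  unfold bern
  rw [hexp, pow_succ, pow_succ]
  linear_combination t ^ k * t * (1 - t) * (1 - t) ^ (n - (k + 1)) * hchoose

theorem sum_mul_bern_pos {n i : ℕ} (hi : i ≤ n) {ω : ℕ → ℝ} (hω : ∀ k ≤ i, 0 < ω k)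
    {t : ℝ} (ht0 : 0 < t) (ht1 : t < 1) :
    0 < ∑ k ∈ range (i + 1), ω k * bern n k t := by
  refine sum_pos (fun k hk => ?_) nonempty_range_add_one
  have hki : k ≤ i := Nat.lt_succ_iff.mp (mem_range.mp hk)
  exact mul_pos (hω k hki) (bern_pos (hki.trans hi) ht0 ht1)

theorem hfun_zero (n : ℕ) (ω : ℕ → ℝ) : hfun n ω 0 = fun _ => 1 := by
  funext t
  simp [hfun]

theorem hfun_eq_div {n : ℕ} {ω : ℕ → ℝ} (hω0 : ω 0 ≠ 0) (j : ℕ) {t : ℝ} (ht : t ≠ 1) :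
    hfun n ω j t = ω j * bern n j t / ∑ k ∈ range (j + 1), ω k * bern n k t := by
  rcases Nat.eq_zero_or_pos j with rfl | hj
  · have hpow : (1 - t) ^ n ≠ 0 := pow_ne_zero _ (sub_ne_zero.mpr ht.symm)
    simp [hfun, bern, div_self (mul_ne_zero hω0 hpow)]
  · rw [hfun, if_neg hj.ne']

theorem differentiableAt_hfun {n j : ℕ} (hj : j ≤ n) {ω : ℕ → ℝ} (hω : ∀ k ≤ j, 0 < ω k)
    {t : ℝ} (ht0 : 0 < t) (ht1 : t < 1) : DifferentiableAt ℝ (hfun n ω j) t := by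
  rcases Nat.eq_zero_or_pos j with rfl | hj0
  · rw [hfun_zero]
    exact differentiableAt_const _
  · have hfun_eq :
        hfun n ω j = fun s => ω j * bern n j s / ∑ k ∈ range (j + 1), ω k * bern n k s := by
      funext s
      rw [hfun, if_neg hj0.ne']
    rw [hfun_eq]
    exact DifferentiableAt.div (by fun_prop) (by fun_prop) (sum_mul_bern_pos hj hω ht0 ht1).ne'

theorem hfun_succ_mul_eq {n k : ℕ} (hk : k < n) {ω : ℕ → ℝ} (hω : ∀ j ≤ k + 1, 0 < ω j)
    {t : ℝ} (ht0 : 0 < t) (ht1 : t < 1) :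
    hfun n ω (k + 1) t * (ω k * (k + 1) * (1 - t) + ω (k + 1) * (n - k) * t * hfun n ω k t) =
      ω (k + 1) * (n - k) * t * hfun n ω k t := by
  have hω0 : ω 0 ≠ 0 := (hω 0 k.succ.zero_le).ne'
  have hS := sum_mul_bern_pos hk.le (fun j hj => hω j (hj.trans k.le_succ)) ht0 ht1
  have hS' := sum_mul_bern_pos hk hω ht0 ht1
  rw [hfun_eq_div hω0 (k + 1) ht1.ne, hfun_eq_div hω0 k ht1.ne, sum_range_succ _ (k + 1)]
  rw [sum_range_succ _ (k + 1)] at hS'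
  have hrel := succ_mul_one_sub_mul_bern_succ hk t
  set S := ∑ j ∈ range (k + 1), ω j * bern n j t
  field_simp
  linear_combination ω (k + 1) * ω k * S * hrel

theorem deriv_mul_eq_of_eventually_mul_eq {f g : ℝ → ℝ} {a b t : ℝ}
    (hf : DifferentiableAt ℝ f t) (hg : DifferentiableAt ℝ g t)
    (h : ∀ᶠ s in 𝓝 t, f s * (a * (1 - s) + b * s * g s) = b * s * g s) :
    deriv f t * (a * (1 - t) + b * t * g t) =
      a * f t + b * (1 - f t) * (t * deriv g t + g t) := by
  have hg' : HasDerivAt (fun s => b * s * g s) (b * 1 * g t + b * t * deriv g t) t :=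
    ((hasDerivAt_id t).const_mul b).mul hg.hasDerivAt
  have hlhs : HasDerivAt (fun s => f s * (a * (1 - s) + b * s * g s))
      (deriv f t * (a * (1 - t) + b * t * g t) +
        f t * (a * -1 + (b * 1 * g t + b * t * deriv g t))) t :=
    hf.hasDerivAt.mul ((((hasDerivAt_id t).const_sub 1).const_mul a).add hg')
  linear_combination hlhs.unique (hg'.congr_of_eventuallyEq h)

theorem hfun_first_deriv_recurrence_general (n : ℕ) (ω : ℕ → ℝ)
    (hω : ∀ k ≤ n, 0 < ω k) :
    (∀ s : ℝ, deriv (hfun n ω 0) s = 0)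
    ∧ ∀ i, 1 ≤ i → i ≤ n → ∀ t : ℝ, 0 < t → t < 1 →
        deriv (hfun n ω i) t *
            (ω (i - 1) * i * (1 - t) + ω i * t * ((n : ℝ) - i + 1) * hfun n ω (i - 1) t) =
          ω (i - 1) * i * hfun n ω i t
            + ω i * ((n : ℝ) - i + 1) * (1 - hfun n ω i t) *
                (t * deriv (hfun n ω (i - 1)) t + hfun n ω (i - 1) t) := by
  refine ⟨fun s => by rw [hfun_zero, deriv_const], fun i hi1 hin t ht0 ht1 => ?_⟩
  obtain ⟨k, rfl⟩ : ∃ k, i = k + 1 := ⟨i - 1, by omega⟩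
  have hk : k < n := hin
  have hωk : ∀ j ≤ k + 1, 0 < ω j := fun j hj => hω j (hj.trans hin)
  have hrec : ∀ᶠ s in 𝓝 t, hfun n ω (k + 1) s *
      (ω k * (k + 1) * (1 - s) + ω (k + 1) * (n - k) * s * hfun n ω k s) =
        ω (k + 1) * (n - k) * s * hfun n ω k s :=
    mem_of_superset (Ioo_mem_nhds ht0 ht1) fun s hs => hfun_succ_mul_eq hk hωk hs.1 hs.2
  have hderiv := deriv_mul_eq_of_eventually_mul_eq
    (differentiableAt_hfun hin hωk ht0 ht1)
    (differentiableAt_hfun hk.le (fun j hj => hωk j (hj.trans k.le_succ)) ht0 ht1) hrec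
  simp only [Nat.add_sub_cancel]
  push_cast
  linear_combination hderiv

/-- differential-recurrence relation for the first derivative of `h^n_i`,
with `(h^n_0)' ≡ 0`. -/
theorem hfun_first_deriv_recurrence (n : ℕ) (hn : 1 ≤ n) (ω : ℕ → ℝ)
    (hω : ∀ k ≤ n, 0 < ω k) :
    (∀ s : ℝ, deriv (hfun n ω 0) s = 0)
    ∧ ∀ i, 1 ≤ i → i ≤ n → ∀ t : ℝ, 0 < t → t < 1 →
        deriv (hfun n ω i) t *
            (ω (i - 1) * i * (1 - t) + ω i * t * ((n : ℝ) - i + 1) * hfun n ω (i - 1) t) =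
          ω (i - 1) * i * hfun n ω i t
            + ω i * ((n : ℝ) - i + 1) * (1 - hfun n ω i t) *
                (t * deriv (hfun n ω (i - 1)) t + hfun n ω (i - 1) t) :=
  hfun_first_deriv_recurrence_general n ω hω
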